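/- Let X be a geodesic δ-hyperbolic metric space with basepoint x₀ and set C_δ = 432δ. Let A and B be hyperbolic isometries of X with l_S(A) > C_δ and l_S(B) > C_δ. Assume: (i) there exist geodesic lines L_A from A⁻ to A⁺ and L_B from B⁻ to B⁺; and (ii) the fixed-point pairs of A and B at infinity are disjoint, encoded by: for each choice of signs ε, ε' ∈ {+1, −1}, the family of Gromov products (A^{εn}x₀ | B^{ε'm}x₀)_{x₀}, for n,m ∈ ℕ, is bounded above. Then max( l_S(AB), l_S(AB⁻¹) ) ≥ l_S(A) + l_S(B) − C_δ. -/

import Mathlib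

/-!
Displacements dominate stable norms: `l_S(A) ≤ d(Az, z)` and `l_S(B) ≤ d(Bz, z)` for every `z`.
Take `x` almost minimising `d(Ax, x) + d(Bx, x)`. If a Gromov product at `x` between `A^{±1}x` and
`B^{±1}x` were large, pushing `x` a little along the common direction would decrease this sum;
with the four-point condition this forces, for one sign `ε`, both `(A⁻¹x | B^ε x)_x` and
`(Ax | B^{-ε} x)_x` to be `O(δ)`. Then `x, Ax, AB^ε x, AB^ε Ax, …` is a broken geodesic with long
pieces and small Gromov products at the breaks, along which distances add up with a loss of
`O(δ)` per piece, so `l_S(AB^ε) ≥ d(Ax, x) + d(B^ε x, x) − 40δ`.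
-/
open Metric Filter Set Topology

/-- The Gromov product `(x|y)_z = ½(d(z,x)+d(z,y)−d(x,y))`. -/
noncomputable def gromovProd {X : Type*} [MetricSpace X] (x y z : X) : ℝ :=
  (dist z x + dist z y - dist x y) / 2

/-- A parametrized geodesic segment from `x` to `y` (defined on `[0, dist x y]`). -/
def IsGeodesicSegment {X : Type*} [MetricSpace X] (x y : X) (f : ℝ → X) : Prop :=
  f 0 = x ∧ f (dist x y) = y ∧
    ∀ s ∈ Set.Icc (0 : ℝ) (dist x y), ∀ t ∈ Set.Icc (0 : ℝ) (dist x y),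
      dist (f s) (f t) = |s - t|

/-- The metric space `X` is geodesic: any two points are joined by a geodesic segment. -/
def GeodesicMetricSpace (X : Type*) [MetricSpace X] : Prop :=
  ∀ x y : X, ∃ f : ℝ → X, IsGeodesicSegment x y f

/-- `X` is δ-hyperbolic in the sense of Rips: every geodesic triangle is δ-thin,
i.e. each side is contained in the δ-neighbourhood of the union of the other two. -/
def RipsHyperbolic (X : Type*) [MetricSpace X] (δ : ℝ) : Prop :=
  ∀ (x y z : X) (f g h : ℝ → X),
    IsGeodesicSegment x y f → IsGeodesicSegment y z g → IsGeodesicSegment z x h →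
      ∀ s ∈ Set.Icc (0 : ℝ) (dist x y),
        infDist (f s) (g '' Set.Icc 0 (dist y z) ∪ h '' Set.Icc 0 (dist z x)) ≤ δ

/-- A (parametrized) geodesic line in `X`. -/
def IsGeodesicLine {X : Type*} [MetricSpace X] (L : ℝ → X) : Prop :=
  ∀ s t : ℝ, dist (L s) (L t) = |s - t|

/-- A (parametrized) geodesic ray in `X` (parametrized on `[0,∞)`). -/
def IsGeodesicRay {X : Type*} [MetricSpace X] (r : ℝ → X) : Prop :=
  ∀ s t : ℝ, 0 ≤ s → 0 ≤ t → dist (r s) (r t) = |s - t|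

/-- `L` is a geodesic from `A⁻` to `A⁺` (oriented toward `A⁺`): it is a geodesic line
such that, with `x₀ = L 0`, the Gromov products `(Aⁿx₀ | L t)_{x₀}` tend to `+∞` as
`min(n,t) → +∞`, and `(A⁻ⁿx₀ | L (−t))_{x₀}` tend to `+∞` as `min(n,t) → +∞`. -/
def IsGeodesicFromTo {X : Type*} [MetricSpace X] (A : X ≃ᵢ X) (L : ℝ → X) : Prop :=
  IsGeodesicLine L ∧
    (∀ M : ℝ, ∃ N : ℝ, ∀ (n : ℕ) (t : ℝ), N ≤ (n : ℝ) → N ≤ t →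
      M ≤ gromovProd ((A ^ n) (L 0)) (L t) (L 0)) ∧
    (∀ M : ℝ, ∃ N : ℝ, ∀ (n : ℕ) (t : ℝ), N ≤ (n : ℝ) → N ≤ t →
      M ≤ gromovProd ((A⁻¹ ^ n) (L 0)) (L (-t)) (L 0))

/-- An element of `F₂` is primitive if it is the image of a generator under an
automorphism of `F₂` (equivalently, it belongs to some free basis). -/
def Primitive (γ : FreeGroup (Fin 2)) : Prop :=
  ∃ φ : FreeGroup (Fin 2) ≃* FreeGroup (Fin 2), φ (FreeGroup.of 0) = γ

/-- The (reduced) word length of an element of `F₂`. -/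
noncomputable def wordLength (γ : FreeGroup (Fin 2)) : ℕ := γ.toWord.length

/-- The cyclically reduced word length `‖γ‖`: the minimum of the word lengths
of the conjugates of `γ`. -/
noncomputable def cycLength (γ : FreeGroup (Fin 2)) : ℕ :=
  sInf (Set.range fun g : FreeGroup (Fin 2) => wordLength (g * γ * g⁻¹))

/-- `γ` is cyclically reduced if its word length equals its cyclically reduced length. -/
def CyclicallyReduced (γ : FreeGroup (Fin 2)) : Prop :=
  wordLength γ = cycLength γ

section GromovProduct

variable {X : Type*} [MetricSpace X]

lemma gromovProd_comm (x y z : X) : gromovProd x y z = gromovProd y x z := by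
  unfold gromovProd; rw [dist_comm x y]; ring

lemma gromovProd_nonneg (x y z : X) : 0 ≤ gromovProd x y z := by
  unfold gromovProd; linarith [dist_triangle_left x y z]

lemma gromovProd_le_dist_left (x y z : X) : gromovProd x y z ≤ dist z x := by
  unfold gromovProd; linarith [dist_triangle z x y]

lemma gromovProd_le_dist_right (x y z : X) : gromovProd x y z ≤ dist z y :=
  gromovProd_comm x y z ▸ gromovProd_le_dist_left y x z

lemma gromovProd_add_gromovProd (x y z : X) :
    gromovProd x y z + gromovProd x z y = dist y z := by
  unfold gromovProd; linarith [dist_comm y x, dist_comm z x, dist_comm z y]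

lemma gromovProd_map (φ : X ≃ᵢ X) (x y z : X) :
    gromovProd (φ x) (φ y) (φ z) = gromovProd x y z := by
  simp only [gromovProd, φ.dist_eq]

lemma gromovProd_le_dist_of_dist_add_dist_eq {x y q : X} (hq : dist x q + dist q y = dist x y)
    (w : X) : gromovProd x y w ≤ dist w q := by
  unfold gromovProd; linarith [dist_triangle w q x, dist_triangle w q y, dist_comm q x]

end GromovProduct

section Displacement

variable {X : Type*} [MetricSpace X]

lemma IsometryEquiv.dist_inv_apply_self (φ : X ≃ᵢ X) (z : X) : dist (φ⁻¹ z) z = dist (φ z) z := by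
  rw [← φ.dist_eq (φ⁻¹ z) z, φ.apply_inv_self, dist_comm]

lemma IsometryEquiv.dist_apply_self_le (φ : X ≃ᵢ X) (x z : X) :
    dist (φ x) x ≤ dist (φ z) z + 2 * dist x z := by
  linarith [dist_triangle4 (φ x) (φ z) z x, φ.dist_eq x z, dist_comm z x]

lemma IsometryEquiv.dist_pow_apply_self_le (φ : X ≃ᵢ X) (z : X) (n : ℕ) :
    dist ((φ ^ n) z) z ≤ n * dist (φ z) z := by
  induction n with
  | zero => simp
  | succ n ih =>
    calc dist ((φ ^ (n + 1)) z) z ≤ dist ((φ ^ n) (φ z)) ((φ ^ n) z) + dist ((φ ^ n) z) z := by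
          rw [pow_succ, IsometryEquiv.mul_apply]; exact dist_triangle _ _ _
      _ ≤ (n + 1 : ℕ) * dist (φ z) z := by rw [(φ ^ n).dist_eq]; push_cast; linarith

lemma IsometryEquiv.tendsto_dist_pow_apply_self_div {φ : X ≃ᵢ X} {x₀ : X} {l : ℝ}
    (h : Tendsto (fun n : ℕ => dist ((φ ^ n) x₀) x₀ / n) atTop (𝓝 l)) (z : X) :
    Tendsto (fun n : ℕ => dist ((φ ^ n) z) z / n) atTop (𝓝 l) := by
  refine h.congr_dist (squeeze_zero (fun _ => dist_nonneg) (fun n => ?_)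
    (tendsto_const_div_atTop_nhds_zero_nat (2 * dist x₀ z)))
  rw [Real.dist_eq, ← sub_div, abs_div, Nat.abs_cast]
  gcongr
  exact abs_sub_le_iff.2 ⟨by linarith [(φ ^ n).dist_apply_self_le x₀ z],
    by linarith [(φ ^ n).dist_apply_self_le z x₀, dist_comm x₀ z]⟩

lemma IsometryEquiv.le_dist_apply_self_of_tendsto {φ : X ≃ᵢ X} {x₀ : X} {l : ℝ}
    (h : Tendsto (fun n : ℕ => dist ((φ ^ n) x₀) x₀ / n) atTop (𝓝 l)) (z : X) :
    l ≤ dist (φ z) z := by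
  refine le_of_tendsto (φ.tendsto_dist_pow_apply_self_div h z) ?_
  filter_upwards [eventually_ge_atTop 1] with n hn
  rw [div_le_iff₀ (by exact_mod_cast hn)]
  linarith [φ.dist_pow_apply_self_le z n]

lemma IsometryEquiv.le_of_tendsto_of_mul_le_dist {φ : X ≃ᵢ X} {x₀ : X} {l : ℝ}
    (h : Tendsto (fun n : ℕ => dist ((φ ^ n) x₀) x₀ / n) atTop (𝓝 l)) {x : X} {K : ℝ}
    (hK : ∀ n : ℕ, n * K ≤ dist ((φ ^ n) x) x) : K ≤ l := by
  refine ge_of_tendsto (φ.tendsto_dist_pow_apply_self_div h x) ?_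
  filter_upwards [eventually_ge_atTop 1] with n hn
  rw [le_div_iff₀ (by exact_mod_cast hn)]
  linarith [hK n]

end Displacement

lemma exists_forall_le_add_of_bddBelow {α : Type*} [Nonempty α] {F : α → ℝ}
    (hF : BddBelow (range F)) {κ : ℝ} (hκ : 0 < κ) : ∃ x, ∀ z, F x ≤ F z + κ := by
  obtain ⟨x, hx⟩ := exists_lt_of_ciInf_lt (lt_add_of_pos_right (⨅ z, F z) hκ)
  exact ⟨x, fun z => hx.le.trans (add_le_add_left (ciInf_le hF z) κ)⟩

section JointDisplacement

variable {X : Type*} [MetricSpace X]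

def jointDisplacement (φ ψ : X ≃ᵢ X) (z : X) : ℝ := dist (φ z) z + dist (ψ z) z

lemma jointDisplacement_comm (φ ψ : X ≃ᵢ X) :
    jointDisplacement φ ψ = jointDisplacement ψ φ :=
  funext fun _ => add_comm _ _

lemma jointDisplacement_inv_left (φ ψ : X ≃ᵢ X) :
    jointDisplacement φ⁻¹ ψ = jointDisplacement φ ψ :=
  funext fun z => by simp only [jointDisplacement, φ.dist_inv_apply_self]

lemma jointDisplacement_inv_right (φ ψ : X ≃ᵢ X) :
    jointDisplacement φ ψ⁻¹ = jointDisplacement φ ψ :=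
  funext fun z => by simp only [jointDisplacement, ψ.dist_inv_apply_self]

lemma bddBelow_range_jointDisplacement (φ ψ : X ≃ᵢ X) :
    BddBelow (range (jointDisplacement φ ψ)) :=
  ⟨0, by rintro _ ⟨z, rfl⟩; unfold jointDisplacement; positivity⟩

end JointDisplacement

lemma sum_range_two_mul_of_alternating {a : ℕ → ℝ} {α β : ℝ} (hα : ∀ k, a (2 * k) = α)
    (hβ : ∀ k, a (2 * k + 1) = β) (n : ℕ) : ∑ i ∈ Finset.range (2 * n), a i = n * (α + β) := by
  induction n with
  | zero => simp
  | succ n ih =>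
    rw [show 2 * (n + 1) = 2 * n + 1 + 1 by ring, Finset.sum_range_succ, Finset.sum_range_succ, ih,
      hα, hβ]
    push_cast; ring

section InterleavedOrbit

variable {X : Type*} [MetricSpace X]

/-- The sequence `p, q, W p, W q, W² p, W² q, …`. -/
def interleavedOrbit (W : X ≃ᵢ X) (p q : X) (j : ℕ) : X :=
  (W ^ (j / 2)) (if Even j then p else q)

lemma interleavedOrbit_two_mul (W : X ≃ᵢ X) (p q : X) (k : ℕ) :
    interleavedOrbit W p q (2 * k) = (W ^ k) p := by
  simp [interleavedOrbit]

lemma interleavedOrbit_two_mul_add_one (W : X ≃ᵢ X) (p q : X) (k : ℕ) :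
    interleavedOrbit W p q (2 * k + 1) = (W ^ k) q := by
  rw [interleavedOrbit, if_neg (Nat.not_even_two_mul_add_one k), show (2 * k + 1) / 2 = k by omega]

lemma interleavedOrbit_two_mul_add_two (W : X ≃ᵢ X) (p q : X) (k : ℕ) :
    interleavedOrbit W p q (2 * k + 2) = (W ^ k) (W p) := by
  rw [show 2 * k + 2 = 2 * (k + 1) by ring, interleavedOrbit_two_mul, pow_succ,
    IsometryEquiv.mul_apply]

lemma interleavedOrbit_two_mul_add_three (W : X ≃ᵢ X) (p q : X) (k : ℕ) :
    interleavedOrbit W p q (2 * k + 3) = (W ^ k) (W q) := by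
  rw [show 2 * k + 3 = 2 * (k + 1) + 1 by ring, interleavedOrbit_two_mul_add_one, pow_succ,
    IsometryEquiv.mul_apply]

end InterleavedOrbit

namespace IsGeodesicSegment

variable {X : Type*} [MetricSpace X] {x y : X} {f : ℝ → X} {s : ℝ}

lemma dist_left (hf : IsGeodesicSegment x y f) (hs : s ∈ Icc 0 (dist x y)) : dist x (f s) = s := by
  have h := hf.2.2 0 (left_mem_Icc.2 dist_nonneg) s hs
  rwa [hf.1, zero_sub, abs_neg, abs_of_nonneg hs.1] at h

lemma dist_right (hf : IsGeodesicSegment x y f) (hs : s ∈ Icc 0 (dist x y)) :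
    dist (f s) y = dist x y - s := by
  have h := hf.2.2 s hs _ (right_mem_Icc.2 dist_nonneg)
  rw [hf.2.1, abs_of_nonpos (by linarith [hs.2])] at h
  linarith

lemma dist_add_dist (hf : IsGeodesicSegment x y f) (hs : s ∈ Icc 0 (dist x y)) :
    dist x (f s) + dist (f s) y = dist x y := by
  rw [hf.dist_left hs, hf.dist_right hs]; ring

lemma symm (hf : IsGeodesicSegment x y f) :
    IsGeodesicSegment y x (fun s => f (dist x y - s)) := by
  refine ⟨by simpa using hf.2.1, by simpa [dist_comm y x] using hf.1, fun s hs t ht => ?_⟩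
  rw [dist_comm y x] at hs ht
  rw [hf.2.2 _ ⟨by linarith [hs.2], by linarith [hs.1]⟩ _ ⟨by linarith [ht.2], by linarith [ht.1]⟩,
    abs_sub_comm]
  ring_nf

lemma map (hf : IsGeodesicSegment x y f) (φ : X ≃ᵢ X) : IsGeodesicSegment (φ x) (φ y) (φ ∘ f) := by
  refine ⟨by simp [hf.1], by simp [φ.dist_eq, hf.2.1], fun s hs t ht => ?_⟩
  rw [φ.dist_eq] at hs ht
  simpa [φ.dist_eq] using hf.2.2 s hs t ht

lemma continuousOn (hf : IsGeodesicSegment x y f) : ContinuousOn f (Icc 0 (dist x y)) :=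
  (LipschitzOnWith.of_dist_le_mul fun s hs t ht => by
    rw [hf.2.2 s hs t ht, Real.dist_eq, NNReal.coe_one, one_mul]).continuousOn

lemma dist_apply_self_le {φ : X ≃ᵢ X} (hf : IsGeodesicSegment x (φ x) f)
    (hs : s ∈ Icc 0 (dist x (φ x))) : dist (φ (f s)) (f s) ≤ dist x (φ x) :=
  calc dist (φ (f s)) (f s) ≤ dist (φ (f s)) (φ x) + dist (φ x) (f s) := dist_triangle _ _ _
    _ = dist x (φ x) := by
      rw [φ.dist_eq, dist_comm _ x, dist_comm (φ x), hf.dist_left hs, hf.dist_right hs]; ring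

end IsGeodesicSegment

namespace RipsHyperbolic

variable {X : Type*} [MetricSpace X] {δ : ℝ}

lemma exists_dist_le (hhyp : RipsHyperbolic X δ) {x y z : X} {f g h : ℝ → X}
    (hf : IsGeodesicSegment x y f) (hg : IsGeodesicSegment y z g) (hh : IsGeodesicSegment z x h)
    {s : ℝ} (hs : s ∈ Icc 0 (dist x y)) :
    (∃ r ∈ Icc 0 (dist y z), dist (f s) (g r) ≤ δ) ∨
      ∃ r ∈ Icc 0 (dist z x), dist (f s) (h r) ≤ δ := by
  have hK := (isCompact_Icc.image_of_continuousOn hg.continuousOn).union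
    (isCompact_Icc.image_of_continuousOn hh.continuousOn)
  obtain ⟨q, hq, hdq⟩ := hK.exists_infDist_eq_dist
    ⟨g 0, mem_union_left _ (mem_image_of_mem g (left_mem_Icc.2 dist_nonneg))⟩ (f s)
  have hq' : dist (f s) q ≤ δ := hdq ▸ hhyp x y z f g h hf hg hh s hs
  rcases hq with ⟨r, hr, rfl⟩ | ⟨r, hr, rfl⟩
  exacts [Or.inl ⟨r, hr, hq'⟩, Or.inr ⟨r, hr, hq'⟩]

/-- The point of `[x, y]` at distance `(y|w)_x` from `x` is `(x|y)_w + 2δ`-close to `w`. -/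
lemma exists_dist_le_gromovProd_add (hhyp : RipsHyperbolic X δ) (hgeo : GeodesicMetricSpace X)
    (w : X) {x y : X} {f : ℝ → X} (hf : IsGeodesicSegment x y f) :
    ∃ s ∈ Icc 0 (dist x y), dist w (f s) ≤ gromovProd x y w + 2 * δ := by
  set s := gromovProd y w x with hs_def
  have hs : s ∈ Icc 0 (dist x y) := ⟨gromovProd_nonneg _ _ _, gromovProd_le_dist_left _ _ _⟩
  refine ⟨s, hs, ?_⟩
  obtain ⟨g, hg⟩ := hgeo y w
  obtain ⟨h, hh⟩ := hgeo w x
  have hx := hf.dist_left hs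
  have hy := hf.dist_right hs
  unfold gromovProd at hs_def ⊢
  rcases hhyp.exists_dist_le hf hg hh hs with ⟨r, hr, hq⟩ | ⟨r, hr, hq⟩
  · linarith [hg.dist_add_dist hr, dist_triangle w (g r) (f s), dist_triangle (f s) (g r) y,
      dist_comm w (g r), dist_comm (g r) (f s), dist_comm y (g r), dist_comm w x, dist_comm w y]
  · linarith [hh.dist_add_dist hr, dist_triangle w (h r) (f s), dist_triangle x (h r) (f s),
      dist_comm (h r) (f s), dist_comm (h r) x, dist_comm w x, dist_comm w y]

lemma min_gromovProd_le (hhyp : RipsHyperbolic X δ) (hgeo : GeodesicMetricSpace X)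
    (w x y z : X) : min (gromovProd x z w) (gromovProd z y w) ≤ gromovProd x y w + 3 * δ := by
  obtain ⟨f, hf⟩ := hgeo x y
  obtain ⟨g, hg⟩ := hgeo y z
  obtain ⟨h, hh⟩ := hgeo z x
  obtain ⟨s, hs, hws⟩ := hhyp.exists_dist_le_gromovProd_add hgeo w hf
  rcases hhyp.exists_dist_le hf hg hh hs with ⟨r, hr, hq⟩ | ⟨r, hr, hq⟩
  · refine (min_le_right _ _).trans ?_
    linarith [gromovProd_le_dist_of_dist_add_dist_eq (hg.dist_add_dist hr) w,
      gromovProd_comm z y w, dist_triangle w (f s) (g r)]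
  · refine (min_le_left _ _).trans ?_
    linarith [gromovProd_le_dist_of_dist_add_dist_eq (hh.dist_add_dist hr) w,
      gromovProd_comm x z w, dist_triangle w (f s) (h r)]

lemma dist_le_of_add_lt_gromovProd (hhyp : RipsHyperbolic X δ) (hgeo : GeodesicMetricSpace X)
    (hδ : 0 ≤ δ) {x u v : X} {f g : ℝ → X} (hf : IsGeodesicSegment x u f)
    (hg : IsGeodesicSegment x v g) {t : ℝ} (ht : 0 ≤ t) (htuv : t + δ < gromovProd u v x) :
    dist (f t) (g t) ≤ 2 * δ := by
  have htu : t ∈ Icc 0 (dist x u) := ⟨ht, by linarith [gromovProd_le_dist_left u v x]⟩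
  have htv : t ∈ Icc 0 (dist x v) := ⟨ht, by linarith [gromovProd_le_dist_right u v x]⟩
  have hxt := hf.dist_left htu
  obtain ⟨k, hk⟩ := hgeo u v
  rcases hhyp.exists_dist_le hf hk hg.symm htu with ⟨r, hr, hq⟩ | ⟨r, hr, hq⟩
  · -- `[u, v]` stays at distance at least `(u|v)_x` from `x`
    linarith [gromovProd_le_dist_of_dist_add_dist_eq (hk.dist_add_dist hr) x,
      dist_triangle x (f t) (k r)]
  · rw [dist_comm v x] at hr
    have hs : dist x v - r ∈ Icc 0 (dist x v) := ⟨by linarith [hr.2], by linarith [hr.1]⟩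
    have hxs := hg.dist_left hs
    have hst : |dist x v - r - t| ≤ δ := abs_le.2
      ⟨by linarith [dist_triangle x (g (dist x v - r)) (f t), dist_comm (g (dist x v - r)) (f t)],
        by linarith [dist_triangle x (f t) (g (dist x v - r))]⟩
    calc dist (f t) (g t) ≤ dist (f t) (g (dist x v - r)) + dist (g (dist x v - r)) (g t) :=
          dist_triangle _ _ _
      _ ≤ δ + δ := add_le_add hq (hg.2.2 _ hs t htv ▸ hst)
      _ = 2 * δ := by ring

/-- Pushing `x` a distance `t` towards `φ⁻¹ x` shortens the displacement of `φ` by about `2t`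
when `φ x` and `φ⁻¹ x` point apart, and barely changes that of `ψ` when `ψ x` points along. -/
lemma exists_jointDisplacement_le (hhyp : RipsHyperbolic X δ) (hgeo : GeodesicMetricSpace X)
    (hδ : 0 ≤ δ) (φ ψ : X ≃ᵢ X) (x : X) {t : ℝ} (ht : 0 ≤ t) (h2t : 2 * t ≤ dist (φ x) x)
    (hφ : t + δ < gromovProd (φ x) (φ⁻¹ x) x) (hψ : t + δ < gromovProd (φ⁻¹ x) (ψ x) x) :
    ∃ z, jointDisplacement φ ψ z ≤ jointDisplacement φ ψ x - 2 * t + 6 * δ := by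
  obtain ⟨f, hf⟩ := hgeo x (φ x)
  obtain ⟨k, hk⟩ := hgeo x (ψ x)
  set u := dist x (φ x)
  obtain ⟨g, hg, hφg⟩ : ∃ g : ℝ → X, IsGeodesicSegment x (φ⁻¹ x) g ∧ ∀ s, φ (g s) = f (u - s) :=
    ⟨_, by simpa using hf.symm.map φ⁻¹, fun s => by simp [u]⟩
  have htu : t ∈ Icc 0 u := ⟨ht, by linarith [dist_comm x (φ x)]⟩
  have hut : u - t ∈ Icc 0 u := ⟨by linarith [htu.2], by linarith⟩
  have htk : t ∈ Icc 0 (dist x (ψ x)) :=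
    ⟨ht, by linarith [gromovProd_le_dist_right (φ⁻¹ x) (ψ x) x]⟩
  have hdφ : dist (φ (g t)) (g t) ≤ u - 2 * t + 2 * δ :=
    calc dist (φ (g t)) (g t) ≤ dist (f (u - t)) (f t) + dist (f t) (g t) := by
          rw [hφg]; exact dist_triangle _ _ _
      _ ≤ u - 2 * t + 2 * δ := by
          rw [hf.2.2 _ hut _ htu, abs_of_nonneg (by linarith [dist_comm x (φ x)])]
          linarith [hhyp.dist_le_of_add_lt_gromovProd hgeo hδ hf hg ht hφ]
  have hdψ : dist (ψ (g t)) (g t) ≤ dist x (ψ x) + 4 * δ := by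
    linarith [ψ.dist_apply_self_le (g t) (k t), hk.dist_apply_self_le htk,
      hhyp.dist_le_of_add_lt_gromovProd hgeo hδ hg hk ht hψ]
  exact ⟨g t, by unfold jointDisplacement; linarith [dist_comm x (φ x), dist_comm x (ψ x)]⟩

lemma gromovProd_le_or_of_forall_le_add (hhyp : RipsHyperbolic X δ)
    (hgeo : GeodesicMetricSpace X) (hδ : 0 ≤ δ) {φ ψ : X ≃ᵢ X} {x : X} {κ : ℝ} (hκ : 0 < κ)
    (hx : ∀ z, jointDisplacement φ ψ x ≤ jointDisplacement φ ψ z + κ)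
    (hφx : 6 * δ + 2 * κ ≤ dist (φ x) x) :
    gromovProd (φ⁻¹ x) (ψ x) x ≤ 4 * δ + κ ∨ gromovProd (φ x) (φ⁻¹ x) x ≤ 4 * δ + κ := by
  by_contra! h
  obtain ⟨z, hz⟩ := hhyp.exists_jointDisplacement_le hgeo hδ φ ψ x (t := 3 * δ + κ)
    (by linarith) (by linarith) (by linarith [h.2]) (by linarith [h.1])
  linarith [hx z]

lemma gromovProd_le_or_gromovProd_le (hhyp : RipsHyperbolic X δ)
    (hgeo : GeodesicMetricSpace X) (hδ : 0 ≤ δ) {φ ψ : X ≃ᵢ X} {x : X} {κ : ℝ} (hκ : 0 < κ)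
    (hx : ∀ z, jointDisplacement φ ψ x ≤ jointDisplacement φ ψ z + κ)
    (hφx : 6 * δ + 2 * κ ≤ dist (φ x) x) :
    gromovProd (φ x) (ψ x) x ≤ 7 * δ + κ ∨ gromovProd (φ⁻¹ x) (ψ x) x ≤ 7 * δ + κ := by
  have h₁ := hhyp.gromovProd_le_or_of_forall_le_add hgeo hδ hκ hx hφx
  have h₂ := hhyp.gromovProd_le_or_of_forall_le_add hgeo hδ hκ (φ := φ⁻¹)
    (by simpa only [jointDisplacement_inv_left] using hx) (by rwa [φ.dist_inv_apply_self])
  rw [inv_inv, gromovProd_comm (φ⁻¹ x)] at h₂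
  rcases h₁ with h₁ | hφ
  · exact Or.inr (by linarith)
  rcases h₂ with h₂ | -
  · exact Or.inl (by linarith)
  have h₄ := hhyp.min_gromovProd_le hgeo x (φ x) (φ⁻¹ x) (ψ x)
  rw [gromovProd_comm (ψ x)] at h₄
  exact (min_le_iff.1 h₄).imp (fun h => by linarith) (fun h => by linarith)

lemma exists_gromovProd_le (hhyp : RipsHyperbolic X δ) (hgeo : GeodesicMetricSpace X)
    (hδ : 0 ≤ δ) [Nonempty X] (A B : X ≃ᵢ X) {κ : ℝ} (hκ : 0 < κ)
    (hA : ∀ z, 6 * δ + 2 * κ ≤ dist (A z) z) (hB : ∀ z, 6 * δ + 2 * κ ≤ dist (B z) z) :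
    ∃ x B', (B' = B ∨ B' = B⁻¹) ∧
      gromovProd (A⁻¹ x) (B' x) x ≤ 7 * δ + κ ∧ gromovProd (A x) (B'⁻¹ x) x ≤ 7 * δ + κ := by
  obtain ⟨x, hx⟩ := exists_forall_le_add_of_bddBelow (bddBelow_range_jointDisplacement A B) hκ
  have e₁ := hhyp.gromovProd_le_or_gromovProd_le hgeo hδ hκ hx (hA x)
  have e₂ := hhyp.gromovProd_le_or_gromovProd_le hgeo hδ hκ (ψ := B⁻¹)
    (by simpa only [jointDisplacement_inv_right] using hx) (hA x)
  have e₃ := hhyp.gromovProd_le_or_gromovProd_le hgeo hδ hκ (ψ := A)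
    (by simpa only [jointDisplacement_comm A B] using hx) (hB x)
  have e₄ := hhyp.gromovProd_le_or_gromovProd_le hgeo hδ hκ (ψ := A⁻¹)
    (by simpa only [jointDisplacement_inv_right, jointDisplacement_comm A B] using hx) (hB x)
  rw [gromovProd_comm (B x), gromovProd_comm (B⁻¹ x)] at e₃ e₄
  -- `e₁ … e₄` say that the small products cover the edges of a 4-cycle, hence a diagonal
  rcases (by tauto : (gromovProd (A⁻¹ x) (B x) x ≤ 7 * δ + κ ∧
      gromovProd (A x) (B⁻¹ x) x ≤ 7 * δ + κ) ∨ (gromovProd (A⁻¹ x) (B⁻¹ x) x ≤ 7 * δ + κ ∧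
      gromovProd (A x) (B x) x ≤ 7 * δ + κ)) with h | h
  · exact ⟨x, B, Or.inl rfl, h⟩
  · exact ⟨x, B⁻¹, Or.inr rfl, by rwa [inv_inv]⟩

lemma gromovProd_le_of_chain (hhyp : RipsHyperbolic X δ) (hgeo : GeodesicMetricSpace X)
    (hδ : 0 ≤ δ) {y : ℕ → X} {C : ℝ}
    (hbreak : ∀ k, gromovProd (y k) (y (k + 2)) (y (k + 1)) ≤ C)
    (hpiece : ∀ k, 2 * C + 6 * δ < dist (y k) (y (k + 1))) (i : ℕ) :
    gromovProd (y 0) (y (i + 2)) (y (i + 1)) ≤ C + 3 * δ := by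
  induction i with
  | zero => linarith [hbreak 0]
  | succ n ih =>
    have hfar : C + 3 * δ < gromovProd (y (n + 1)) (y 0) (y (n + 2)) := by
      linarith [gromovProd_add_gromovProd (y 0) (y (n + 1)) (y (n + 2)), hpiece (n + 1),
        gromovProd_comm (y 0) (y (n + 1)) (y (n + 2))]
    have hb := hbreak (n + 1)
    rw [show n + 1 + 2 = n + 3 from rfl, show n + 1 + 1 = n + 2 from rfl] at hb
    have h₄ := hhyp.min_gromovProd_le hgeo (y (n + 2)) (y (n + 1)) (y (n + 3)) (y 0)
    rcases min_le_iff.1 (h₄.trans (add_le_add_left hb _)) with h | h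
    · exact absurd h (not_le.2 hfar)
    · exact h

lemma sum_le_dist_of_chain (hhyp : RipsHyperbolic X δ) (hgeo : GeodesicMetricSpace X)
    (hδ : 0 ≤ δ) {y : ℕ → X} {C : ℝ}
    (hbreak : ∀ k, gromovProd (y k) (y (k + 2)) (y (k + 1)) ≤ C)
    (hpiece : ∀ k, 2 * C + 6 * δ < dist (y k) (y (k + 1))) (n : ℕ) :
    ∑ i ∈ Finset.range n, (dist (y i) (y (i + 1)) - (2 * C + 6 * δ)) ≤ dist (y 0) (y n) := by
  induction n with
  | zero => simp
  | succ n ih =>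
    rw [Finset.sum_range_succ]
    rcases n with _ | m
    · simp only [Finset.range_zero, Finset.sum_empty, zero_add]
      linarith [hbreak 0, gromovProd_nonneg (y 0) (y 2) (y 1)]
    · have h := hhyp.gromovProd_le_of_chain hgeo hδ hbreak hpiece m
      unfold gromovProd at h
      linarith [dist_comm (y (m + 1)) (y 0)]

lemma mul_le_dist_pow_apply_of_gromovProd_le (hhyp : RipsHyperbolic X δ)
    (hgeo : GeodesicMetricSpace X) (hδ : 0 ≤ δ) (W : X ≃ᵢ X) {p q : X} {C : ℝ}
    (hp : gromovProd p (W p) q ≤ C) (hq : gromovProd q (W q) (W p) ≤ C)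
    (hpq : 2 * C + 6 * δ < dist p q) (hqp : 2 * C + 6 * δ < dist q (W p)) (n : ℕ) :
    n * (dist p q + dist q (W p) - 2 * (2 * C + 6 * δ)) ≤ dist p ((W ^ n) p) := by
  set y := interleavedOrbit W p q
  have h₀ : ∀ k, y (2 * k) = (W ^ k) p := interleavedOrbit_two_mul W p q
  have h₁ : ∀ k, y (2 * k + 1) = (W ^ k) q := interleavedOrbit_two_mul_add_one W p q
  have h₂ : ∀ k, y (2 * k + 2) = (W ^ k) (W p) := interleavedOrbit_two_mul_add_two W p q
  have h₃ : ∀ k, y (2 * k + 3) = (W ^ k) (W q) := interleavedOrbit_two_mul_add_three W p q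
  have hpiece_even : ∀ k, dist (y (2 * k)) (y (2 * k + 1)) = dist p q := fun k => by
    rw [h₀, h₁, IsometryEquiv.dist_eq]
  have hpiece_odd : ∀ k, dist (y (2 * k + 1)) (y (2 * k + 1 + 1)) = dist q (W p) := fun k => by
    rw [h₁, show 2 * k + 1 + 1 = 2 * k + 2 from rfl, h₂, IsometryEquiv.dist_eq]
  have hbreak : ∀ j, gromovProd (y j) (y (j + 2)) (y (j + 1)) ≤ C := by
    intro j
    obtain ⟨k, rfl | rfl⟩ := Nat.even_or_odd' j
    · rwa [h₀, h₁, h₂, gromovProd_map]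
    · rwa [h₁, show 2 * k + 1 + 1 = 2 * k + 2 from rfl, show 2 * k + 1 + 2 = 2 * k + 3 from rfl,
        h₂, h₃, gromovProd_map]
  have hpiece : ∀ j, 2 * C + 6 * δ < dist (y j) (y (j + 1)) := by
    intro j
    obtain ⟨k, rfl | rfl⟩ := Nat.even_or_odd' j
    · rwa [hpiece_even]
    · rwa [hpiece_odd]
  calc _ = ∑ i ∈ Finset.range (2 * n), (dist (y i) (y (i + 1)) - (2 * C + 6 * δ)) := by
        rw [sum_range_two_mul_of_alternating (fun k => by rw [hpiece_even])
          (fun k => by rw [hpiece_odd])]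
        ring
    _ ≤ dist (y 0) (y (2 * n)) := hhyp.sum_le_dist_of_chain hgeo hδ hbreak hpiece (2 * n)
    _ = dist p ((W ^ n) p) := by rw [h₀, show y 0 = p by simpa using h₀ 0]

lemma mul_le_dist_mul_pow_apply (hhyp : RipsHyperbolic X δ) (hgeo : GeodesicMetricSpace X)
    (hδ : 0 ≤ δ) (A B : X ≃ᵢ X) {x : X} {C : ℝ}
    (hAB : gromovProd (A⁻¹ x) (B x) x ≤ C) (hBA : gromovProd (A x) (B⁻¹ x) x ≤ C)
    (hA : 2 * C + 6 * δ < dist (A x) x) (hB : 2 * C + 6 * δ < dist (B x) x) (n : ℕ) :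
    n * (dist (A x) x + dist (B x) x - 2 * (2 * C + 6 * δ)) ≤ dist (((A * B) ^ n) x) x := by
  have hxAx : dist x (A x) = dist (A x) x := dist_comm _ _
  have hAxABx : dist (A x) ((A * B) x) = dist (B x) x := by
    rw [IsometryEquiv.mul_apply, A.dist_eq, dist_comm]
  have hp : gromovProd x ((A * B) x) (A x) = gromovProd (A⁻¹ x) (B x) x := by
    rw [← gromovProd_map A (A⁻¹ x), A.apply_inv_self]; rfl
  have hq : gromovProd (A x) ((A * B) (A x)) ((A * B) x) = gromovProd (A x) (B⁻¹ x) x := by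
    rw [gromovProd_comm (A x) (B⁻¹ x), ← gromovProd_map (A * B) (B⁻¹ x)]
    simp [IsometryEquiv.mul_apply]
  have h := hhyp.mul_le_dist_pow_apply_of_gromovProd_le hgeo hδ (A * B) (hp ▸ hAB) (hq ▸ hBA)
    (hxAx ▸ hA) (hAxABx ▸ hB) n
  rwa [hxAx, hAxABx, dist_comm x] at h

/-- At an almost minimum `x` of `z ↦ d(Az, z) + d(Bz, z)`, the orbit of `x` under `AB` or
`AB⁻¹` is a broken geodesic with small Gromov products at the breaks. -/
lemma add_sub_le_max_of_tendsto
    (hhyp : RipsHyperbolic X δ) (hgeo : GeodesicMetricSpace X) (hδ : 0 ≤ δ) {x₀ : X}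
    {A B : X ≃ᵢ X} {lA lB lAB lABinv κ : ℝ}
    (hdA : ∀ z, lA ≤ dist (A z) z) (hdB : ∀ z, lB ≤ dist (B z) z)
    (hlAB : Tendsto (fun n : ℕ => dist (((A * B) ^ n) x₀) x₀ / n) atTop (𝓝 lAB))
    (hlABinv : Tendsto (fun n : ℕ => dist (((A * B⁻¹) ^ n) x₀) x₀ / n) atTop (𝓝 lABinv))
    (hκ : 0 < κ) (hκA : 20 * δ + 2 * κ < lA) (hκB : 20 * δ + 2 * κ < lB) :
    lA + lB - (40 * δ + 4 * κ) ≤ max lAB lABinv := by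
  have : Nonempty X := ⟨x₀⟩
  obtain ⟨x, B', hB', hAB, hBA⟩ := hhyp.exists_gromovProd_le hgeo hδ A B hκ
    (fun z => by linarith [hdA z]) (fun z => by linarith [hdB z])
  have hdB' : lB ≤ dist (B' x) x := by
    rcases hB' with rfl | rfl
    exacts [hdB x, B.dist_inv_apply_self x ▸ hdB x]
  have hchain := hhyp.mul_le_dist_mul_pow_apply hgeo hδ A B' hAB hBA
    (by linarith [hdA x]) (by linarith)
  rcases hB' with rfl | rfl
  · linarith [(A * B').le_of_tendsto_of_mul_le_dist hlAB hchain, le_max_left lAB lABinv, hdA x]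
  · linarith [(A * B⁻¹).le_of_tendsto_of_mul_le_dist hlABinv hchain, le_max_right lAB lABinv,
      hdA x]

end RipsHyperbolic

theorem stable_norm_product_max_bound_general
    {X : Type*} [MetricSpace X] (δ : ℝ) (hδ : 0 ≤ δ)
    (hgeo : GeodesicMetricSpace X) (hhyp : RipsHyperbolic X δ)
    (x₀ : X) (A B : X ≃ᵢ X) (lA lB lAB lABinv : ℝ)
    (hlA : Tendsto (fun n : ℕ => dist ((A ^ n) x₀) x₀ / n) atTop (𝓝 lA))
    (hlB : Tendsto (fun n : ℕ => dist ((B ^ n) x₀) x₀ / n) atTop (𝓝 lB))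
    (hlAB : Tendsto (fun n : ℕ => dist (((A * B) ^ n) x₀) x₀ / n) atTop (𝓝 lAB))
    (hlABinv : Tendsto (fun n : ℕ => dist (((A * B⁻¹) ^ n) x₀) x₀ / n) atTop (𝓝 lABinv))
    (hlAbig : lA > 432 * δ) (hlBbig : lB > 432 * δ) :
    lA + lB - 432 * δ ≤ max lAB lABinv := by
  have hbound : ∀ᶠ κ in 𝓝[>] 0, lA + lB - (40 * δ + 4 * κ) ≤ max lAB lABinv := by
    have hpos : (0 : ℝ) < (min lA lB - 20 * δ) / 2 := by
      linarith [lt_min (show 20 * δ < lA by linarith) (show 20 * δ < lB by linarith)]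
    filter_upwards [Ioo_mem_nhdsGT hpos] with κ ⟨hκ, hκ'⟩
    exact hhyp.add_sub_le_max_of_tendsto hgeo hδ (A.le_dist_apply_self_of_tendsto hlA)
      (B.le_dist_apply_self_of_tendsto hlB) hlAB hlABinv hκ
      (by linarith [min_le_left lA lB]) (by linarith [min_le_right lA lB])
  have hlim : Tendsto (fun κ : ℝ => lA + lB - (40 * δ + 4 * κ)) (𝓝[>] 0)
      (𝓝 (lA + lB - 40 * δ)) := by
    have h : Continuous fun κ : ℝ => lA + lB - (40 * δ + 4 * κ) := by fun_prop
    simpa using h.continuousWithinAt.tendsto (s := Ioi 0) (x := 0)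
  linarith [le_of_tendsto hlim hbound]

/-- Length of a product of hyperbolic isometries. With `C_δ = 432δ`, if
`A` and `B` are hyperbolic isometries with `l_S(A) > C_δ`, `l_S(B) > C_δ`, admitting
geodesic lines between their fixed points at infinity, and with disjoint fixed-point
pairs at infinity (encoded by boundedness of the Gromov products of the four pairs of
half-orbits), then `max(l_S(AB), l_S(AB⁻¹)) ≥ l_S(A) + l_S(B) − C_δ`. -/
theorem stable_norm_product_max_bound
    {X : Type*} [MetricSpace X] (δ : ℝ) (hδ : 0 ≤ δ)
    (hgeo : GeodesicMetricSpace X) (hhyp : RipsHyperbolic X δ)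
    (x₀ : X) (A B : X ≃ᵢ X) (lA lB lAB lABinv : ℝ)
    (hlA : Tendsto (fun n : ℕ => dist ((A ^ n) x₀) x₀ / n) atTop (𝓝 lA))
    (hlB : Tendsto (fun n : ℕ => dist ((B ^ n) x₀) x₀ / n) atTop (𝓝 lB))
    (hlAB : Tendsto (fun n : ℕ => dist (((A * B) ^ n) x₀) x₀ / n) atTop (𝓝 lAB))
    (hlABinv : Tendsto (fun n : ℕ => dist (((A * B⁻¹) ^ n) x₀) x₀ / n) atTop (𝓝 lABinv))
    (hlAbig : lA > 432 * δ) (hlBbig : lB > 432 * δ)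
    (hLA : ∃ LA : ℝ → X, IsGeodesicFromTo A LA)
    (hLB : ∃ LB : ℝ → X, IsGeodesicFromTo B LB)
    (hdisj : ∀ A' : X ≃ᵢ X, (A' = A ∨ A' = A⁻¹) → ∀ B' : X ≃ᵢ X, (B' = B ∨ B' = B⁻¹) →
      ∃ M : ℝ, ∀ n m : ℕ, gromovProd ((A' ^ n) x₀) ((B' ^ m) x₀) x₀ ≤ M) :
    lA + lB - 432 * δ ≤ max lAB lABinv :=
  stable_norm_product_max_bound_general δ hδ hgeo hhyp x₀ A B lA lB lAB lABinv hlA hlB hlAB hlABinv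
    hlAbig hlBbig
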